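/- For smooth Christoffel symbols Γ^k_{ij} symmetric in i, j, the square of the covariant derivation ∇ on Ω is the action of the curvature: ∇²a = R·a for all a ∈ Ω, where R·a = −(1/2) dx^i dx^j (R_{ij})^k_l(x) y^l ∂a/∂y^k and (R_{ij})^k_l = ∂_{x^i}Γ^k_{jl} − ∂_{x^j}Γ^k_{il} + Γ^k_{im}Γ^m_{jl} − Γ^k_{jm}Γ^m_{il} is the Riemann curvature tensor of the connection. -/

import Mathlib

/-!
Coordinate model of the Fedosov resolution on `M = ℝ^d`, following Dolgushev,
"Covariant and equivariant formality theorems".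

An element `a : Omega d` represents the exterior form with values in the formally
completed symmetric algebra of the cotangent bundle,
`a = ∑ a_{m,S}(x) y^m dx^S`, where `m` is the multi-index of exponents of the
commuting formal fibre variables `y^1, …, y^d` and `S` is the (increasingly
ordered) set of indices of the anticommuting `dx`'s; `a m S : (Fin d → ℝ) → ℝ`
is the corresponding (smooth) coefficient.
-/

noncomputable section
open scoped BigOperators

namespace FedosovModel

/-- Multi-indices: exponents of the formal fibre variables `y`. -/
abbrev Mi (d : ℕ) := Fin d →₀ ℕ

/-- The coordinate model of `Ω(ℝ^d, 𝒮M)`: `a m S x` is the coefficient of the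
monomial `y^m dx^S` (with the `dx`'s in increasing order) at the point `x`. -/
abbrev Omega (d : ℕ) := Mi d → Finset (Fin d) → (Fin d → ℝ) → ℝ

variable (d : ℕ)

/-- total `y`-degree of a multi-index -/
def ydeg (m : Mi d) : ℕ := ∑ i, m i

/-- all coefficients are smooth functions on `ℝ^d` -/
def Smooth (a : Omega d) : Prop := ∀ m S, ContDiff ℝ (⊤ : ℕ∞) (a m S)

/-- `a` is homogeneous of exterior degree `q`, i.e. `a ∈ Ω^q` -/
def ExtDeg (q : ℕ) (a : Omega d) : Prop := ∀ m S, S.card ≠ q → a m S = 0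

/-- the sign defined by `dx^i ∧ dx^S = sgn i S • dx^{S ∪ {i}}` for `i ∉ S` -/
def sgn (i : Fin d) (S : Finset (Fin d)) : ℝ :=
  (-1 : ℝ) ^ (S.filter (fun j => j < i)).card

/-- the projection `σ(a) = a|_{y = dx = 0}` -/
def sigmaOm (a : Omega d) : (Fin d → ℝ) → ℝ := a 0 ∅

/-- a function on `ℝ^d` viewed as an element of `Ω` with no `y`- and `dx`-dependence -/
def ofFun (f : (Fin d → ℝ) → ℝ) : Omega d :=
  fun m S => if m = 0 ∧ S = ∅ then f else 0

/-- the differential `δ = dx^i ∂/∂y^i` -/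
def deltaOp (a : Omega d) : Omega d := fun m S x =>
  ∑ i ∈ S, sgn d i (S.erase i) * ((m i : ℝ) + 1) *
    a (m + Finsupp.single i 1) (S.erase i) x

/-- the homotopy operator `δ⁻¹`, acting on a component of `y`-degree `p` and
exterior degree `q` with `p + q > 0` as `(p+q)⁻¹ y^k ι(∂/∂x^k)`, and as `0`
on the component `p = q = 0`. -/
def deltaInv (a : Omega d) : Omega d := fun m S x =>
  (((ydeg d m + S.card : ℕ) : ℝ))⁻¹ *
    ∑ k : Fin d,
      if k ∉ S ∧ 1 ≤ m k then sgn d k S * a (m - Finsupp.single k 1) (insert k S) x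
      else 0

/-- partial derivative `∂f/∂x^i` -/
def pd (i : Fin d) (f : (Fin d → ℝ) → ℝ) : (Fin d → ℝ) → ℝ :=
  fun x => fderiv ℝ f x (Pi.single i 1)

/-- Christoffel symbols: `Γ k i j = Γ^k_{ij}` -/
abbrev Christoffel (d : ℕ) := Fin d → Fin d → Fin d → (Fin d → ℝ) → ℝ

def SmoothGamma (Γ : Christoffel d) : Prop := ∀ k i j, ContDiff ℝ (⊤ : ℕ∞) (Γ k i j)

def TorsionFree (Γ : Christoffel d) : Prop := ∀ k i j, Γ k i j = Γ k j i

/-- the covariant derivative `∇a = dx^i ∂a/∂x^i − dx^i Γ^k_{ij}(x) y^j ∂a/∂y^k` -/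
def nablaOp (Γ : Christoffel d) (a : Omega d) : Omega d := fun m S x =>
  ∑ i ∈ S, sgn d i (S.erase i) *
    (pd d i (a m (S.erase i)) x -
      ∑ j : Fin d, ∑ k : Fin d,
        if 1 ≤ m j then
          let m' : Mi d := m + Finsupp.single k 1 - Finsupp.single j 1
          Γ k i j x * ((m' k : ℕ) : ℝ) * a m' (S.erase i) x
        else 0)

/-- the Riemann curvature tensor
`(R_{ij})^k_l = ∂_i Γ^k_{jl} − ∂_j Γ^k_{il} + Γ^k_{im} Γ^m_{jl} − Γ^k_{jm} Γ^m_{il}` -/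
def Riem (Γ : Christoffel d) (i j k l : Fin d) : (Fin d → ℝ) → ℝ := fun x =>
  pd d i (Γ k j l) x - pd d j (Γ k i l) x +
    ∑ mm : Fin d, (Γ k i mm x * Γ mm j l x - Γ k j mm x * Γ mm i l x)

/-- the curvature operator `R·a = −(1/2) dx^i dx^j (R_{ij})^k_l y^l ∂a/∂y^k` -/
def curvAct (Γ : Christoffel d) (a : Omega d) : Omega d := fun m S x =>
  -(1/2 : ℝ) * ∑ i ∈ S, ∑ j ∈ S.erase i,
    sgn d i (S.erase i) * sgn d j ((S.erase i).erase j) *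
      ∑ k : Fin d, ∑ l : Fin d,
        if 1 ≤ m l then
          let m' : Mi d := m + Finsupp.single k 1 - Finsupp.single l 1
          Riem d Γ i j k l x * ((m' k : ℕ) : ℝ) * a m' ((S.erase i).erase j) x
        else 0

/-! ### Fiberwise-vector-field-valued one-forms and the Fedosov differential -/

/-- a fiberwise-vector-field-valued one-form `B = dx^k B^j_k(x,y) ∂/∂y^j`:
`B j k m x` is the coefficient of `dx^k y^m ∂/∂y^j` -/
abbrev VF1 (d : ℕ) := Fin d → Fin d → Mi d → (Fin d → ℝ) → ℝ

def SmoothVF1 (A : VF1 d) : Prop := ∀ j k m, ContDiff ℝ (⊤ : ℕ∞) (A j k m)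

/-- all terms of `A` have `y`-degree at least 2 -/
def LowDegVanish (A : VF1 d) : Prop := ∀ j k m, ydeg d m < 2 → A j k m = 0

/-- the action of a fiberwise-vector-field-valued one-form on `Ω` as an odd
derivation: `A·a = dx^k A^j_k(x,y) ∂a/∂y^j` -/
def vact (A : VF1 d) (a : Omega d) : Omega d := fun m S x =>
  ∑ k ∈ S, sgn d k (S.erase k) *
    ∑ j : Fin d, ∑ p ∈ Finset.HasAntidiagonal.antidiagonal m,
      A j k p.1 x * ((p.2 j : ℝ) + 1) * a (p.2 + Finsupp.single j 1) (S.erase k) x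

/-- the `∂/∂y^j`-component of a fiberwise-vector-field-valued one-form,
as an element of `Ω` -/
def vf1ToOmega (A : VF1 d) (j : Fin d) : Omega d :=
  fun m S x => ∑ k : Fin d, if S = {k} then A j k m x else 0

/-- the connection one-form `Γ = −dx^i Γ^k_{ij}(x) y^j ∂/∂y^k` as a
fiberwise-vector-field-valued one-form -/
def GammaVF (Γ : Christoffel d) : VF1 d := fun jf kx m x =>
  -∑ l : Fin d, if m = Finsupp.single l 1 then Γ jf kx l x else 0

/-- the `∂/∂y^k`-component of the curvature
`R = −(1/2) dx^i dx^j (R_{ij})^k_l y^l ∂/∂y^k`, as an element of `Ω` -/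
def RVForm (Γ : Christoffel d) (kf : Fin d) : Omega d := fun m S x =>
  -(1/2 : ℝ) * ∑ i : Fin d, ∑ j : Fin d,
    (if S = {i, j} ∧ i < j then (1 : ℝ) else if S = {i, j} ∧ j < i then -1 else 0) *
      ∑ l : Fin d, if m = Finsupp.single l 1 then Riem d Γ i j kf l x else 0

/-- the normalization `δ⁻¹ A = 0` (componentwise in the fibre index) -/
def DeltaInvVanish (A : VF1 d) : Prop := ∀ j, deltaInv d (vf1ToOmega d A j) = 0

/-- the Fedosov derivation `D = ∇ − δ + A·` -/
def Dfed (Γ : Christoffel d) (A : VF1 d) (a : Omega d) : Omega d :=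
  nablaOp d Γ a - deltaOp d a + vact d A a

/-- nilpotency of the Fedosov derivation: `D ∘ D = 0` on `Ω` -/
def Nilpotent (Γ : Christoffel d) (A : VF1 d) : Prop :=
  ∀ a : Omega d, Smooth d a → Dfed d Γ A (Dfed d Γ A a) = 0

/-- the fixed-point equation `A = δ⁻¹R + δ⁻¹(∇A + (1/2)[A,A])`, componentwise in
the fibre index `j`; here `(∇A)^j = dx^i ∂_{x^i}(A^j) + Γ·(A^j) + A·(Γ^j)` and
`((1/2)[A,A])^j = A·(A^j) = dx^k dx^l A^m_k ∂A^j_l/∂y^m`. -/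
def FedosovFixedPoint (Γ : Christoffel d) (A : VF1 d) : Prop :=
  ∀ j, vf1ToOmega d A j =
    deltaInv d (RVForm d Γ j) +
      deltaInv d (nablaOp d Γ (vf1ToOmega d A j) +
        vact d A (vf1ToOmega d (GammaVF d Γ) j) +
        vact d A (vf1ToOmega d A j))

/-! ### The supercommutative product on `Ω` -/

/-- sign of `dx^S ∧ dx^T = shuffleSgn S T • dx^{S ∪ T}` for disjoint `S`, `T` -/
def shuffleSgn (S T : Finset (Fin d)) : ℝ :=
  (-1 : ℝ) ^ ∑ i ∈ S, (T.filter (fun j => j < i)).card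

/-- the supercommutative product of `Ω` -/
def mulOm (a b : Omega d) : Omega d := fun m S x =>
  ∑ T ∈ S.powerset, shuffleSgn d T (S \ T) *
    ∑ p ∈ Finset.HasAntidiagonal.antidiagonal m, a p.1 T x * b p.2 (S \ T) x

/-- `a` is the flat section of the Fedosov differential extending `a₀`:
`a ∈ Ω⁰`, `Da = 0`, `σ(a) = a₀`. -/
def IsFlatSection (Γ : Christoffel d) (A : VF1 d) (a₀ : (Fin d → ℝ) → ℝ)
    (a : Omega d) : Prop :=
  ExtDeg d 0 a ∧ Smooth d a ∧ Dfed d Γ A a = 0 ∧ sigmaOm d a = a₀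

/-!
Write `∇ = dx^i D_i` with `D_i = ∂/∂x^i − Γ_i` and `Γ_i = Γ^k_{il} y^l ∂/∂y^k`, both acting
on the coefficients of a fixed `dx`-monomial. Since the `dx`'s anticommute,
`∇² = ½ dx^i dx^j [D_i, D_j]`. Partial derivatives commute, and the operators `y^l ∂/∂y^k`
satisfy the `gl_d` relations
`[y^l ∂_k, y^{l'} ∂_{k'}] = δ_{kl'} y^l ∂_{k'} − δ_{k'l} y^{l'} ∂_k`,
so `[D_i, D_j] = −(R_{ij})^k_l y^l ∂/∂y^k`.

On families indexed by all of `ℤ^d`, `y^l ∂/∂y^k` is a weighted shift without side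
conditions, and it preserves the families supported in `ℕ^d` because its weight vanishes exactly
on the exponents that the shift moves into `ℕ^d` from outside. So the `gl_d` relations are
checked on `ℤ^d`, after extending coefficients by zero.
-/

section NablaSquared

variable {d : ℕ}

lemma sum_pair_comm {α β M : Type*} [Fintype α] [Fintype β] [AddCommMonoid M]
    (f : α → β → α → β → M) :
    ∑ a, ∑ b, ∑ a', ∑ b', f a b a' b' = ∑ a', ∑ b', ∑ a, ∑ b, f a b a' b' := by
  calc _ = ∑ a, ∑ a', ∑ b, ∑ b', f a b a' b' :=
        Finset.sum_congr rfl fun _ _ => Finset.sum_comm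
    _ = ∑ a', ∑ a, ∑ b', ∑ b, f a b a' b' :=
        Finset.sum_comm.trans (Finset.sum_congr rfl fun _ _ =>
          Finset.sum_congr rfl fun _ _ => Finset.sum_comm)
    _ = _ := Finset.sum_congr rfl fun _ _ => Finset.sum_comm

lemma two_mul_sum_sum_erase_of_antisymm {ι R : Type*} [DecidableEq ι] [CommRing R]
    {S : Finset ι} {c : ι → ι → R} (hc : ∀ i ∈ S, ∀ j ∈ S, i ≠ j → c j i = -c i j)
    (F : ι → ι → R) :
    2 * ∑ i ∈ S, ∑ j ∈ S.erase i, c i j * F i j =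
      ∑ i ∈ S, ∑ j ∈ S.erase i, c i j * (F i j - F j i) := by
  have hswap : ∑ i ∈ S, ∑ j ∈ S.erase i, c i j * F i j =
      -∑ i ∈ S, ∑ j ∈ S.erase i, c i j * F j i := by
    rw [Finset.sum_comm' (s' := fun j => S.erase j) (t' := S) fun i j => by
      simp only [Finset.mem_erase]; tauto]
    simp only [← Finset.sum_neg_distrib]
    refine Finset.sum_congr rfl fun i hi => Finset.sum_congr rfl fun j hj => ?_
    rw [hc i hi j (Finset.mem_of_mem_erase hj) (Finset.ne_of_mem_erase hj).symm, neg_mul]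
  rw [two_mul]
  nth_rewrite 2 [hswap]
  simp only [← sub_eq_add_neg, ← Finset.sum_sub_distrib, mul_sub]

lemma contDiff_pd {f : (Fin d → ℝ) → ℝ} (hf : ContDiff ℝ (⊤ : ℕ∞) f) (i : Fin d) :
    ContDiff ℝ (⊤ : ℕ∞) (pd d i f) :=
  (hf.fderiv_right (by norm_cast)).clm_apply contDiff_const

lemma pd_sub {f g : (Fin d → ℝ) → ℝ} {x : Fin d → ℝ} (hf : DifferentiableAt ℝ f x)
    (hg : DifferentiableAt ℝ g x) (i : Fin d) :
    pd d i (fun y => f y - g y) x = pd d i f x - pd d i g x := by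
  simp [pd, fderiv_fun_sub hf hg]

lemma pd_mul {f g : (Fin d → ℝ) → ℝ} {x : Fin d → ℝ} (hf : DifferentiableAt ℝ f x)
    (hg : DifferentiableAt ℝ g x) (i : Fin d) :
    pd d i (fun y => f y * g y) x = pd d i f x * g x + f x * pd d i g x := by
  simp [pd, fderiv_fun_mul hf hg]
  ring

lemma pd_const_mul {f : (Fin d → ℝ) → ℝ} {x : Fin d → ℝ} (hf : DifferentiableAt ℝ f x)
    (c : ℝ) (i : Fin d) : pd d i (fun y => c * f y) x = c * pd d i f x := by
  simp [pd, fderiv_const_mul hf c]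

lemma pd_sum {ι : Type*} (s : Finset ι) {f : ι → (Fin d → ℝ) → ℝ} {x : Fin d → ℝ}
    (hf : ∀ j ∈ s, DifferentiableAt ℝ (f j) x) (i : Fin d) :
    pd d i (fun y => ∑ j ∈ s, f j y) x = ∑ j ∈ s, pd d i (f j) x := by
  simp [pd, fderiv_fun_sum hf]

lemma pd_comm {f : (Fin d → ℝ) → ℝ} (hf : ContDiff ℝ 2 f) (i j : Fin d) (x : Fin d → ℝ) :
    pd d i (pd d j f) x = pd d j (pd d i f) x := by
  have hf' : DifferentiableAt ℝ (fderiv ℝ f) x :=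
    (hf.fderiv_right (m := 1) (by norm_num)).differentiable (by norm_num) x
  change fderiv ℝ (fun y => fderiv ℝ f y (Pi.single j 1)) x (Pi.single i 1) =
    fderiv ℝ (fun y => fderiv ℝ f y (Pi.single i 1)) x (Pi.single j 1)
  rw [fderiv_clm_apply hf' (differentiableAt_const _),
    fderiv_clm_apply hf' (differentiableAt_const _)]
  simpa using hf.contDiffAt.isSymmSndFDerivAt (by simp) _ _

/-- the coefficients of a fixed `dx`-monomial, i.e. a section of `𝒮M` -/
abbrev Sec (d : ℕ) := Mi d → (Fin d → ℝ) → ℝ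

def SmoothSec (b : Sec d) : Prop := ∀ m, ContDiff ℝ (⊤ : ℕ∞) (b m)

def shift (l k : Fin d) (m : Mi d) : Mi d := m + Finsupp.single k 1 - Finsupp.single l 1

lemma shift_apply (l k : Fin d) (m : Mi d) (i : Fin d) :
    shift l k m i = m i + (if k = i then 1 else 0) - (if l = i then 1 else 0) := by
  simp [shift, Finsupp.single_apply]

/-- `y^l ∂/∂y^k` on coefficients: it sends `y^{m'}` to `m'_k y^m`, where
`m' = m + e_k - e_l` -/
def yOp (l k : Fin d) (b : Sec d) : Sec d := fun m x =>
  if 1 ≤ m l then (shift l k m k : ℝ) * b (shift l k m) x else 0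

lemma contDiff_yOp {b : Sec d} (hb : SmoothSec b) (l k : Fin d) (m : Mi d) :
    ContDiff ℝ (⊤ : ℕ∞) (yOp l k b m) := by
  unfold yOp; split_ifs
  · exact contDiff_const.mul (hb _)
  · exact contDiff_const

lemma pd_yOp {b : Sec d} (hb : SmoothSec b) (l k i : Fin d) (m : Mi d) (x : Fin d → ℝ) :
    pd d i (yOp l k b m) x = yOp l k (fun n => pd d i (b n)) m x := by
  unfold yOp; split_ifs
  · exact pd_const_mul ((hb _).differentiable (by simp) x) _ i
  · simp [pd]

lemma yOp_sum {ι : Type*} (t : Finset ι) (F : ι → Sec d) (l k : Fin d) (m : Mi d)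
    (x : Fin d → ℝ) :
    yOp l k (fun n y => ∑ p ∈ t, F p n y) m x = ∑ p ∈ t, yOp l k (F p) m x := by
  unfold yOp; split_ifs <;> simp [Finset.mul_sum]

lemma yOp_mul_left (c : (Fin d → ℝ) → ℝ) (b : Sec d) (l k : Fin d) (m : Mi d)
    (x : Fin d → ℝ) : yOp l k (fun n y => c y * b n y) m x = c x * yOp l k b m x := by
  unfold yOp; split_ifs <;> ring

lemma yOp_sub (b b' : Sec d) (l k : Fin d) (m : Mi d) (x : Fin d → ℝ) :
    yOp l k (fun n y => b n y - b' n y) m x = yOp l k b m x - yOp l k b' m x := by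
  unfold yOp; split_ifs <;> ring

def shiftZ (l k : Fin d) (n : Fin d → ℤ) : Fin d → ℤ := n + Pi.single k 1 - Pi.single l 1

/-- `y^l ∂/∂y^k` acting on coefficient families indexed by `ℤ^d` -/
def yOpZ (l k : Fin d) (F : (Fin d → ℤ) → ℝ) (n : Fin d → ℤ) : ℝ :=
  (shiftZ l k n k : ℝ) * F (shiftZ l k n)

lemma yOpZ_comm (l k l' k' : Fin d) (F : (Fin d → ℤ) → ℝ) (n : Fin d → ℤ) :
    yOpZ l k (yOpZ l' k' F) n - yOpZ l' k' (yOpZ l k F) n =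
      (if k = l' then yOpZ l k' F n else 0) - (if k' = l then yOpZ l' k F n else 0) := by
  have hpt : n + Pi.single k 1 - Pi.single l 1 + Pi.single k' 1 - Pi.single l' 1 =
      n + Pi.single k' 1 - Pi.single l' 1 + Pi.single k 1 - Pi.single l 1 := by abel
  simp only [yOpZ, shiftZ, hpt, Pi.add_apply, Pi.sub_apply, Pi.single_apply]
  split_ifs <;> subst_vars <;> first | contradiction | (push_cast; ring_nf)

def zeroExt (f : Mi d → ℝ) (n : Fin d → ℤ) : ℝ :=
  if ∀ i, 0 ≤ n i then f (Finsupp.equivFunOnFinite.symm fun i => (n i).toNat) else 0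

lemma zeroExt_natCast (f : Mi d → ℝ) (m : Mi d) : zeroExt f (fun i => (m i : ℤ)) = f m := by
  simp [zeroExt]

lemma zeroExt_yOp (l k : Fin d) (b : Sec d) (x : Fin d → ℝ) :
    zeroExt (fun m => yOp l k b m x) = yOpZ l k (zeroExt fun m => b m x) := by
  funext n
  by_cases hn : ∀ i, 0 ≤ n i
  · obtain ⟨m, rfl⟩ : ∃ m : Mi d, (fun i => (m i : ℤ)) = n :=
      ⟨Finsupp.equivFunOnFinite.symm fun i => (n i).toNat, by ext i; simp [hn i]⟩
    rw [zeroExt_natCast, yOpZ, yOp]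
    split_ifs with hl
    · have hpt : shiftZ l k (fun i => (m i : ℤ)) = fun i => (shift l k m i : ℤ) := by
        ext i; simp only [shiftZ, shift_apply, Pi.add_apply, Pi.sub_apply, Pi.single_apply]
        split_ifs <;> subst_vars <;> omega
      rw [hpt, zeroExt_natCast]
      norm_cast
    · have hml : m l = 0 := by omega
      by_cases hlk : l = k
      · subst hlk; simp [shiftZ, hml]
      · have hneg : ¬ ∀ i, 0 ≤ shiftZ l k (fun i => (m i : ℤ)) i :=
          fun h => by simpa [shiftZ, Pi.single_apply, hlk, hml] using h l
        simp [zeroExt, hneg]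
  · obtain ⟨p, hp⟩ := not_forall.mp hn
    simp only [zeroExt, yOpZ, if_neg hn]
    split_ifs with hq
    · have hcoef : shiftZ l k n k = 0 := by
        have hqp := hq p
        simp only [shiftZ, Pi.add_apply, Pi.sub_apply, Pi.single_apply] at hqp ⊢
        split_ifs at hqp ⊢ <;> subst_vars <;> first | contradiction | omega
      simp [hcoef]
    · simp

lemma yOp_comm (l k l' k' : Fin d) (b : Sec d) (m : Mi d) (x : Fin d → ℝ) :
    yOp l k (yOp l' k' b) m x - yOp l' k' (yOp l k b) m x =
      (if k = l' then yOp l k' b m x else 0) - (if k' = l then yOp l' k b m x else 0) := by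
  have h := yOpZ_comm l k l' k' (zeroExt fun m => b m x) (fun i => (m i : ℤ))
  simpa only [← zeroExt_yOp, zeroExt_natCast] using h

/-- `Γ_i = Γ^k_{il} y^l ∂/∂y^k` -/
def connOp (Γ : Christoffel d) (i : Fin d) (b : Sec d) : Sec d := fun m x =>
  ∑ l, ∑ k, Γ k i l x * yOp l k b m x

lemma contDiff_connOp {Γ : Christoffel d} (hΓ : SmoothGamma d Γ) {b : Sec d} (hb : SmoothSec b)
    (i : Fin d) (m : Mi d) : ContDiff ℝ (⊤ : ℕ∞) (connOp Γ i b m) :=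
  ContDiff.sum fun l _ => ContDiff.sum fun k _ => (hΓ k i l).mul (contDiff_yOp hb l k m)

lemma pd_connOp {Γ : Christoffel d} (hΓ : SmoothGamma d Γ) {b : Sec d} (hb : SmoothSec b)
    (i j : Fin d) (m : Mi d) (x : Fin d → ℝ) :
    pd d i (connOp Γ j b m) x =
      ∑ l, ∑ k, pd d i (Γ k j l) x * yOp l k b m x + connOp Γ j (fun n => pd d i (b n)) m x := by
  have hdiff : ∀ {f : (Fin d → ℝ) → ℝ}, ContDiff ℝ (⊤ : ℕ∞) f → DifferentiableAt ℝ f x :=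
    fun hf => hf.differentiable (by simp) x
  unfold connOp
  rw [pd_sum _ fun l _ => hdiff (ContDiff.sum fun k _ => (hΓ k j l).mul (contDiff_yOp hb l k m)),
    ← Finset.sum_add_distrib]
  refine Finset.sum_congr rfl fun l _ => ?_
  rw [pd_sum _ fun k _ => hdiff ((hΓ k j l).mul (contDiff_yOp hb l k m)),
    ← Finset.sum_add_distrib]
  refine Finset.sum_congr rfl fun k _ => ?_
  rw [pd_mul (hdiff (hΓ k j l)) (hdiff (contDiff_yOp hb l k m)), pd_yOp hb]

lemma connOp_sub (Γ : Christoffel d) (i : Fin d) (b b' : Sec d) (m : Mi d) (x : Fin d → ℝ) :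
    connOp Γ i (fun n y => b n y - b' n y) m x = connOp Γ i b m x - connOp Γ i b' m x := by
  simp only [connOp, yOp_sub, mul_sub, Finset.sum_sub_distrib]

lemma connOp_linear_comb {ι : Type*} (Γ : Christoffel d) (i : Fin d) (t : Finset ι)
    (c : ι → ℝ) (F : ι → Sec d) (m : Mi d) (x : Fin d → ℝ) :
    connOp Γ i (fun n y => ∑ p ∈ t, c p * F p n y) m x = ∑ p ∈ t, c p * connOp Γ i (F p) m x := by
  unfold connOp
  simp only [yOp_sum, yOp_mul_left, Finset.mul_sum]
  refine (Finset.sum_congr rfl fun l _ => Finset.sum_comm).trans (Finset.sum_comm.trans ?_)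
  exact Finset.sum_congr rfl fun p _ => Finset.sum_congr rfl fun l _ =>
    Finset.sum_congr rfl fun k _ => by ring

lemma connOp_connOp (Γ : Christoffel d) (i j : Fin d) (b : Sec d) (m : Mi d) (x : Fin d → ℝ) :
    connOp Γ i (connOp Γ j b) m x =
      ∑ l, ∑ k, ∑ l', ∑ k', Γ k i l x * Γ k' j l' x * yOp l k (yOp l' k' b) m x := by
  unfold connOp
  simp only [yOp_sum, yOp_mul_left, Finset.mul_sum, mul_assoc]

lemma connOp_comm (Γ : Christoffel d) (i j : Fin d) (b : Sec d) (m : Mi d) (x : Fin d → ℝ) :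
    connOp Γ i (connOp Γ j b) m x - connOp Γ j (connOp Γ i b) m x =
      ∑ l, ∑ k, (∑ n, (Γ k j n x * Γ n i l x - Γ k i n x * Γ n j l x)) * yOp l k b m x := by
  calc connOp Γ i (connOp Γ j b) m x - connOp Γ j (connOp Γ i b) m x
      = ∑ l, ∑ k, ∑ l', ∑ k', Γ k i l x * Γ k' j l' x *
          (yOp l k (yOp l' k' b) m x - yOp l' k' (yOp l k b) m x) := by
        rw [connOp_connOp, connOp_connOp, sum_pair_comm fun l k l' k' =>
          Γ k j l x * Γ k' i l' x * yOp l k (yOp l' k' b) m x]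
        simp only [mul_sub, Finset.sum_sub_distrib, mul_comm (Γ _ j _ x)]
    _ = ∑ l, ∑ k, ∑ l', ∑ k', Γ k i l x * Γ k' j l' x *
          ((if k = l' then yOp l k' b m x else 0) - (if k' = l then yOp l' k b m x else 0)) := by
        simp only [yOp_comm]
    _ = _ := by
        simp only [mul_sub, mul_ite, mul_zero, Finset.sum_sub_distrib, Finset.sum_ite_irrel,
          Finset.sum_const_zero, Finset.sum_ite_eq, Finset.sum_ite_eq', Finset.mem_univ, if_true,
          sub_mul, Finset.sum_mul]
        congr 1
        · refine Finset.sum_congr rfl fun _ _ => Finset.sum_comm.trans ?_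
          exact Finset.sum_congr rfl fun _ _ => Finset.sum_congr rfl fun _ _ => by ring
        · exact (Finset.sum_congr rfl fun _ _ => Finset.sum_comm).trans
            (Finset.sum_comm.trans (Finset.sum_congr rfl fun _ _ => Finset.sum_comm))

def covD (Γ : Christoffel d) (i : Fin d) (b : Sec d) : Sec d := fun m x =>
  pd d i (b m) x - connOp Γ i b m x

lemma smoothSec_covD {Γ : Christoffel d} (hΓ : SmoothGamma d Γ) {b : Sec d} (hb : SmoothSec b)
    (i : Fin d) : SmoothSec (covD Γ i b) :=
  fun m => (contDiff_pd (hb m) i).sub (contDiff_connOp hΓ hb i m)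

lemma covD_linear_comb {Γ : Christoffel d} {ι : Type*} (t : Finset ι) (c : ι → ℝ) {F : ι → Sec d}
    (hF : ∀ p ∈ t, SmoothSec (F p)) (i : Fin d) (m : Mi d) (x : Fin d → ℝ) :
    covD Γ i (fun n y => ∑ p ∈ t, c p * F p n y) m x = ∑ p ∈ t, c p * covD Γ i (F p) m x := by
  have hdiff : ∀ p ∈ t, DifferentiableAt ℝ (F p m) x :=
    fun p hp => (hF p hp m).differentiable (by simp) x
  unfold covD
  rw [pd_sum (f := fun p y => c p * F p m y) t fun p hp => (hdiff p hp).const_mul (c p),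
    connOp_linear_comb, ← Finset.sum_sub_distrib]
  refine Finset.sum_congr rfl fun p hp => ?_
  rw [pd_const_mul (hdiff p hp), mul_sub]

lemma covD_covD {Γ : Christoffel d} (hΓ : SmoothGamma d Γ) {b : Sec d} (hb : SmoothSec b)
    (i j : Fin d) (m : Mi d) (x : Fin d → ℝ) :
    covD Γ i (covD Γ j b) m x =
      pd d i (pd d j (b m)) x - ∑ l, ∑ k, pd d i (Γ k j l) x * yOp l k b m x
        - connOp Γ j (fun n => pd d i (b n)) m x - connOp Γ i (fun n => pd d j (b n)) m x
        + connOp Γ i (connOp Γ j b) m x := by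
  unfold covD
  rw [pd_sub ((contDiff_pd (hb m) j).differentiable (by simp) x)
      ((contDiff_connOp hΓ hb j m).differentiable (by simp) x),
    connOp_sub, pd_connOp hΓ hb]
  ring

lemma covD_comm {Γ : Christoffel d} (hΓ : SmoothGamma d Γ) {b : Sec d} (hb : SmoothSec b)
    (i j : Fin d) (m : Mi d) (x : Fin d → ℝ) :
    covD Γ i (covD Γ j b) m x - covD Γ j (covD Γ i b) m x =
      -∑ l, ∑ k, Riem d Γ i j k l x * yOp l k b m x := by
  have hΓΓ := connOp_comm Γ i j b m x
  rw [covD_covD hΓ hb, covD_covD hΓ hb, pd_comm ((hb m).of_le (by norm_cast)) i j]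
  simp only [Riem, add_mul, sub_mul, Finset.sum_add_distrib, Finset.sum_sub_distrib] at hΓΓ ⊢
  linear_combination hΓΓ

lemma nablaOp_apply (Γ : Christoffel d) (a : Omega d) (m : Mi d) (S : Finset (Fin d))
    (x : Fin d → ℝ) :
    nablaOp d Γ a m S x =
      ∑ i ∈ S, sgn d i (S.erase i) * covD Γ i (fun n => a n (S.erase i)) m x := by
  refine Finset.sum_congr rfl fun i _ => ?_
  simp only [covD, connOp, yOp, shift, mul_ite, mul_zero, mul_assoc]

lemma curvAct_apply (Γ : Christoffel d) (a : Omega d) (m : Mi d) (S : Finset (Fin d))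
    (x : Fin d → ℝ) :
    curvAct d Γ a m S x = -(1 / 2) * ∑ i ∈ S, ∑ j ∈ S.erase i,
      sgn d i (S.erase i) * sgn d j ((S.erase i).erase j) *
        ∑ l, ∑ k, Riem d Γ i j k l x * yOp l k (fun n => a n ((S.erase i).erase j)) m x := by
  unfold curvAct
  congr 1
  refine Finset.sum_congr rfl fun i _ => Finset.sum_congr rfl fun j _ => ?_
  rw [Finset.sum_comm]
  simp only [yOp, shift, mul_ite, mul_zero, mul_assoc]

lemma nablaOp_nablaOp {Γ : Christoffel d} (hΓ : SmoothGamma d Γ) {a : Omega d} (ha : Smooth d a)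
    (m : Mi d) (S : Finset (Fin d)) (x : Fin d → ℝ) :
    nablaOp d Γ (nablaOp d Γ a) m S x = ∑ i ∈ S, ∑ j ∈ S.erase i,
      sgn d i (S.erase i) * sgn d j ((S.erase i).erase j) *
        covD Γ i (covD Γ j (fun n => a n ((S.erase i).erase j))) m x := by
  rw [nablaOp_apply]
  refine Finset.sum_congr rfl fun i _ => ?_
  have hslice : (fun n => nablaOp d Γ a n (S.erase i)) = fun n y =>
      ∑ j ∈ S.erase i, sgn d j ((S.erase i).erase j) *
        covD Γ j (fun n => a n ((S.erase i).erase j)) n y := by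
    funext n y; exact nablaOp_apply Γ a n (S.erase i) y
  rw [hslice, covD_linear_comb _ _ (fun j _ => smoothSec_covD hΓ (fun n => ha n _) j),
    Finset.mul_sum]
  exact Finset.sum_congr rfl fun j _ => by ring

lemma sgn_insert (i j : Fin d) {T : Finset (Fin d)} (hj : j ∉ T) :
    sgn d i (insert j T) = (if j < i then -1 else 1) * sgn d i T := by
  unfold sgn
  rw [Finset.filter_insert]
  split_ifs
  · rw [Finset.card_insert_of_notMem fun h => hj (Finset.mem_of_mem_filter j h), pow_succ]
    ring
  · ring

lemma sgn_mul_sgn_swap {S : Finset (Fin d)} {i j : Fin d} (hi : i ∈ S) (hj : j ∈ S)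
    (hij : i ≠ j) :
    sgn d j (S.erase j) * sgn d i ((S.erase j).erase i) =
      -(sgn d i (S.erase i) * sgn d j ((S.erase i).erase j)) := by
  rw [Finset.erase_right_comm (s := S) (a := j) (b := i)]
  set T := (S.erase i).erase j with hT
  have hiT : i ∉ T := fun h => Finset.notMem_erase i S (Finset.mem_of_mem_erase h)
  have hjT : j ∉ T := Finset.notMem_erase j _
  have hSi : S.erase i = insert j T :=
    (Finset.insert_erase (Finset.mem_erase.2 ⟨hij.symm, hj⟩)).symm
  have hSj : S.erase j = insert i T := by
    rw [hT, Finset.erase_right_comm]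
    exact (Finset.insert_erase (Finset.mem_erase.2 ⟨hij, hi⟩)).symm
  rw [hSi, hSj, sgn_insert j i hiT, sgn_insert i j hjT]
  rcases lt_or_gt_of_ne hij with h | h
  · rw [if_pos h, if_neg (asymm h)]; ring
  · rw [if_neg (asymm h), if_pos h]; ring

end NablaSquared

theorem nabla_sq_eq_curvature_general (d : ℕ) (Γ : Christoffel d)
    (hΓ : SmoothGamma d Γ) :
    ∀ a : Omega d, Smooth d a → nablaOp d Γ (nablaOp d Γ a) = curvAct d Γ a := by
  intro a ha
  funext m S x
  have hanti := two_mul_sum_sum_erase_of_antisymm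
    (c := fun i j => sgn d i (S.erase i) * sgn d j ((S.erase i).erase j))
    (fun i hi j hj hij => sgn_mul_sgn_swap hi hj hij)
    (fun i j => covD Γ i (covD Γ j (fun n => a n ((S.erase i).erase j))) m x)
  have hcomm : ∀ i j,
      covD Γ i (covD Γ j (fun n => a n ((S.erase i).erase j))) m x -
        covD Γ j (covD Γ i (fun n => a n ((S.erase j).erase i))) m x =
      -∑ l, ∑ k, Riem d Γ i j k l x * yOp l k (fun n => a n ((S.erase i).erase j)) m x := by
    intro i j
    rw [Finset.erase_right_comm (a := j)]
    exact covD_comm hΓ (fun n => ha n _) i j m x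
  rw [nablaOp_nablaOp hΓ ha, curvAct_apply]
  simp only [hcomm, mul_neg, Finset.sum_neg_distrib] at hanti
  linarith

/-- For smooth Christoffel symbols `Γ^k_{ij}` symmetric in `i, j`,
the square of the covariant derivation `∇` on `Ω` is the action of the curvature:
`∇²a = R·a` with `R·a = −(1/2) dx^i dx^j (R_{ij})^k_l(x) y^l ∂a/∂y^k`, where
`(R_{ij})^k_l` is the Riemann curvature tensor of the connection. -/
theorem nabla_sq_eq_curvature (d : ℕ) (hd : 1 ≤ d) (Γ : Christoffel d)
    (hΓ : SmoothGamma d Γ) (hsym : TorsionFree d Γ) :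
    ∀ a : Omega d, Smooth d a → nablaOp d Γ (nablaOp d Γ a) = curvAct d Γ a :=
  nabla_sq_eq_curvature_general d Γ hΓ

end FedosovModel
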